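/- arXiv:1705.05859 — 2 statements merged into one kernel-verified Lean document; each statement's English description precedes it below -/
import Mathlib

section
/- Let $u_1,\dots,u_{2d}$ be complex numbers with $u_ju_k \neq 1$ for all $j \neq k$. Define the $2d \times 2d$ skew-symmetric matrix $\tilde{M}$ by $\tilde{M}_{jk} = (u_j - u_k)/(1 - u_j u_k)$. Then the Pfaffian of $\tilde{M}$ equals $\prod_{1 \le j < k \le 2d} (u_j - u_k)/(1 - u_j u_k)$. -/
open scoped BigOperators

/-- The Pfaffian of a `2d × 2d` (skew-symmetric) matrix, defined by the full
sum over permutations: `Pf(A) = (2^d d!)⁻¹ ∑_{σ} sgn(σ) ∏_i A_{σ(2i-1) σ(2i)}`. -/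
noncomputable def Pf {d : ℕ} (A : Matrix (Fin (2 * d)) (Fin (2 * d)) ℂ) : ℂ :=
  ((2 : ℂ) ^ d * (Nat.factorial d : ℂ))⁻¹ *
    ∑ σ : Equiv.Perm (Fin (2 * d)),
      ((Equiv.Perm.sign σ : ℤ) : ℂ) *
        ∏ i : Fin d,
          A (σ ⟨2 * i.val, by have := i.isLt; omega⟩)
            (σ ⟨2 * i.val + 1, by have := i.isLt; omega⟩)


open Equiv Equiv.Perm

/-- extend a permutation of `Fin n` to `Fin (n+1)` fixing `0`. -/
def extPerm {n : ℕ} (e : Perm (Fin n)) : Perm (Fin (n + 1)) :=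
  Equiv.Perm.decomposeFin.symm (0, e)

@[simp] lemma extPerm_zero {n : ℕ} (e : Perm (Fin n)) : extPerm e 0 = 0 :=
  Equiv.Perm.decomposeFin_symm_apply_zero 0 e

@[simp] lemma extPerm_succ {n : ℕ} (e : Perm (Fin n)) (x : Fin n) :
    extPerm e x.succ = (e x).succ := by
  simp [extPerm, Equiv.Perm.decomposeFin_symm_apply_succ]

@[simp] lemma sign_extPerm {n : ℕ} (e : Perm (Fin n)) : sign (extPerm e) = sign e := by
  simp [extPerm, Equiv.Perm.decomposeFin.symm_sign]

lemma extPerm_injective {n : ℕ} : Function.Injective (extPerm (n := n)) := by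
  intro a b h
  have := Equiv.Perm.decomposeFin.symm.injective (a₁ := (0, a)) (a₂ := (0, b)) h
  exact (Prod.mk.injEq _ _ _ _ ▸ this).2

section recsetup

variable {d : ℕ}

/-- position `2i`. -/
def pos (i : Fin (d + 1)) : Fin (2 * (d + 1)) := ⟨2 * i.val, by have := i.isLt; omega⟩
/-- position `2i+1`. -/
def pos' (i : Fin (d + 1)) : Fin (2 * (d + 1)) := ⟨2 * i.val + 1, by have := i.isLt; omega⟩

/-- block swap: swaps block `q` with block `0`. -/
def bS (q : Fin (d + 1)) : Perm (Fin (2 * (d + 1))) :=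
  Equiv.swap (pos 0) (pos q) * Equiv.swap (pos' 0) (pos' q)

/-- within-block flip of block 0 depending on parity bit. -/
def sB (b : Bool) : Perm (Fin (2 * (d + 1))) :=
  if b then Equiv.swap (pos 0) (pos' 0) else 1

/-- the full position permutation attached to a position `p`. -/
def gP (p : Fin (2 * (d + 1))) : Perm (Fin (2 * (d + 1))) :=
  sB (decide (p.val % 2 = 1)) * bS ⟨p.val / 2, by have := p.isLt; omega⟩

@[simp] lemma pos_val (i : Fin (d + 1)) : (pos i).val = 2 * i.val := rfl
@[simp] lemma pos'_val (i : Fin (d + 1)) : (pos' i).val = 2 * i.val + 1 := rfl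

lemma fne {n : ℕ} {a b : Fin n} (h : a.val ≠ b.val) : a ≠ b := fun e => h (congrArg Fin.val e)

lemma sign_bS (q : Fin (d + 1)) : sign (bS q) = 1 := by
  rcases eq_or_ne q 0 with rfl | hq
  · simp [bS]
  · have hq' : q.val ≠ 0 := fun h => hq (Fin.ext h)
    have h1 : pos 0 ≠ pos q := fne (by simp only [pos_val, pos'_val]; omega)
    have h2 : pos' 0 ≠ pos' q := fne (by simp only [pos_val, pos'_val]; omega)
    simp [bS, Equiv.Perm.sign_swap h1, Equiv.Perm.sign_swap h2]

lemma sign_sB (b : Bool) : sign (sB (d := d) b) = if b then -1 else 1 := by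
  cases b
  · simp [sB]
  · have h : pos (0 : Fin (d+1)) ≠ pos' 0 := fne (by simp)
    simp [sB, Equiv.Perm.sign_swap h]

end recsetup

section receval
variable {d : ℕ}

lemma pos_inj : Function.Injective (pos (d := d)) := fun a b h => by
  have := congrArg Fin.val h; simp at this; exact Fin.ext this

lemma bS_pos (q i : Fin (d + 1)) : bS q (pos i) = pos (Equiv.swap 0 q i) := by
  have h1 : pos i ≠ pos' 0 := fne (by simp only [pos_val, pos'_val]; omega)
  have h2 : pos i ≠ pos' q := fne (by simp only [pos_val, pos'_val]; omega)
  show Equiv.swap (pos 0) (pos q) (Equiv.swap (pos' 0) (pos' q) (pos i)) = _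
  rw [Equiv.swap_apply_of_ne_of_ne h1 h2]
  rcases eq_or_ne i 0 with rfl | h0
  · rw [Equiv.swap_apply_left, Equiv.swap_apply_left]
  rcases eq_or_ne i q with rfl | hq
  · rw [Equiv.swap_apply_right, Equiv.swap_apply_right]
  · rw [Equiv.swap_apply_of_ne_of_ne (fun h => h0 (pos_inj h)) (fun h => hq (pos_inj h)),
      Equiv.swap_apply_of_ne_of_ne h0 hq]

lemma pos'_inj : Function.Injective (pos' (d := d)) := fun a b h => by
  have := congrArg Fin.val h; simp at this; exact Fin.ext this

lemma bS_pos' (q i : Fin (d + 1)) : bS q (pos' i) = pos' (Equiv.swap 0 q i) := by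
  have h1 : Equiv.swap (pos' (0:Fin (d+1))) (pos' q) (pos' i) = pos' (Equiv.swap 0 q i) := by
    rcases eq_or_ne i 0 with rfl | h0
    · rw [Equiv.swap_apply_left, Equiv.swap_apply_left]
    rcases eq_or_ne i q with rfl | hq
    · rw [Equiv.swap_apply_right, Equiv.swap_apply_right]
    · rw [Equiv.swap_apply_of_ne_of_ne (fun h => h0 (pos'_inj h)) (fun h => hq (pos'_inj h)),
        Equiv.swap_apply_of_ne_of_ne h0 hq]
  show Equiv.swap (pos 0) (pos q) (Equiv.swap (pos' 0) (pos' q) (pos' i)) = _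
  rw [h1]
  exact Equiv.swap_apply_of_ne_of_ne (fne (by simp only [pos_val, pos'_val]; omega)) (fne (by simp only [pos_val, pos'_val]; omega))

/-- the combined position permutation, parametrized by block and parity. -/
def gP' (q : Fin (d + 1)) (b : Bool) : Perm (Fin (2 * (d + 1))) := sB b * bS q

lemma gP'_pos (q : Fin (d + 1)) (b : Bool) (i : Fin (d + 1)) :
    gP' q b (pos i) = if b = true ∧ i = q then pos' (Equiv.swap 0 q i)
      else pos (Equiv.swap 0 q i) := by
  show sB b (bS q (pos i)) = _
  rw [bS_pos]
  cases b with
  | false => simp [sB]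
  | true =>
    show Equiv.swap (pos 0) (pos' 0) _ = _
    rcases eq_or_ne i q with rfl | hiq
    · simp [Equiv.swap_apply_left]
    · have hne : Equiv.swap 0 q i ≠ 0 := by
        intro h
        have := congrArg (Equiv.swap (0:Fin (d+1)) q) h
        simp at this; exact hiq this
      rw [Equiv.swap_apply_of_ne_of_ne (fun h => hne (pos_inj h)) (fne (by simp))]
      simp [hiq]

lemma gP'_pos' (q : Fin (d + 1)) (b : Bool) (i : Fin (d + 1)) :
    gP' q b (pos' i) = if b = true ∧ i = q then pos (Equiv.swap 0 q i)
      else pos' (Equiv.swap 0 q i) := by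
  show sB b (bS q (pos' i)) = _
  rw [bS_pos']
  cases b with
  | false => simp [sB]
  | true =>
    show Equiv.swap (pos 0) (pos' 0) _ = _
    rcases eq_or_ne i q with rfl | hiq
    · simp [Equiv.swap_apply_right]
    · have hne : Equiv.swap 0 q i ≠ 0 := by
        intro h
        have := congrArg (Equiv.swap (0:Fin (d+1)) q) h
        simp at this; exact hiq this
      rw [Equiv.swap_apply_of_ne_of_ne (fne (by simp)) (fun h => hne (pos'_inj h))]
      simp [hiq]

lemma sign_gP' (q : Fin (d + 1)) (b : Bool) :
    sign (gP' q b) = if b then -1 else 1 := by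
  rw [gP', Equiv.Perm.sign_mul, sign_bS, sign_sB, mul_one]

end receval

section recmain
variable {d : ℕ}

/-- the index permutation `0 ↦ 0, 1 ↦ k+1, j+2 ↦ (succAbove k j)+1`. -/
def cK (k : Fin (2 * d + 1)) : Perm (Fin (2 * (d + 1))) := extPerm k.cycleRange.symm

/-- double extension, fixing `0` and `1`. -/
def exx (τ : Perm (Fin (2 * d))) : Perm (Fin (2 * (d + 1))) := extPerm (extPerm τ)

lemma pos_zero : pos (0 : Fin (d + 1)) = (0 : Fin (2 * (d + 1))) := Fin.ext (by simp)

lemma pos'_zero : pos' (0 : Fin (d + 1)) = ((0 : Fin (2 * d + 1)).succ : Fin (2 * (d + 1))) :=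
  Fin.ext (by simp; exact (Nat.mod_eq_of_lt (by omega)).symm)

lemma cK_zero (k : Fin (2 * d + 1)) : cK k (0 : Fin (2 * (d + 1))) = 0 := by
  exact extPerm_zero _

lemma cK_one (k : Fin (2 * d + 1)) : cK k ((0 : Fin (2 * d + 1)).succ) = k.succ := by
  have h := extPerm_succ (k.cycleRange.symm) (0 : Fin (2 * d + 1))
  rw [Fin.cycleRange_symm_zero] at h
  exact h

lemma cK_ss (k : Fin (2 * d + 1)) (x : Fin (2 * d)) :
    cK k (x.succ.succ) = (k.succAbove x).succ := by
  have h := extPerm_succ (k.cycleRange.symm) (x.succ)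
  rw [Fin.cycleRange_symm_succ] at h
  exact h

lemma sign_cK (k : Fin (2 * d + 1)) : sign (cK k) = (-1) ^ (k : ℕ) := by
  have h : sign (cK k) = sign k.cycleRange.symm := by exact sign_extPerm _
  rw [h, show k.cycleRange.symm = k.cycleRange⁻¹ from rfl, Equiv.Perm.sign_inv,
    Fin.sign_cycleRange]

lemma exx_zero (τ : Perm (Fin (2 * d))) : exx τ (0 : Fin (2 * (d + 1))) = 0 := by
  exact extPerm_zero _

lemma exx_one (τ : Perm (Fin (2 * d))) :
    exx τ ((0 : Fin (2 * d + 1)).succ) = (0 : Fin (2 * d + 1)).succ := by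
  have h := extPerm_succ (extPerm τ) (0 : Fin (2 * d + 1))
  rw [extPerm_zero] at h
  exact h

lemma exx_ss (τ : Perm (Fin (2 * d))) (x : Fin (2 * d)) :
    exx τ (x.succ.succ) = (τ x).succ.succ := by
  have h := extPerm_succ (extPerm τ) (x.succ)
  rw [extPerm_succ] at h
  exact h

lemma sign_exx (τ : Perm (Fin (2 * d))) : sign (exx τ) = sign τ := by
  have h1 : sign (exx τ) = sign (extPerm τ) := by exact sign_extPerm _
  rw [h1, sign_extPerm]

lemma exx_injective : Function.Injective (exx (d := d)) := by
  intro a b h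
  have h' : extPerm (extPerm a) = extPerm (extPerm b) := by exact h
  exact extPerm_injective (extPerm_injective h')

set_option maxHeartbeats 2000000 in
theorem pf_rec (A : Matrix (Fin (2 * (d + 1))) (Fin (2 * (d + 1))) ℂ)
    (hA : ∀ i j, A j i = - A i j) :
    Pf A = ∑ k : Fin (2 * d + 1), (-1) ^ (k : ℕ) * A 0 k.succ *
      Pf (A.submatrix (fun j : Fin (2 * d) => ((k.succAbove j).succ : Fin (2 * (d + 1))))
        (fun j => (k.succAbove j).succ)) := by
  classical
  set F : Perm (Fin (2 * (d + 1))) → ℂ := fun σ =>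
    ((Equiv.Perm.sign σ : ℤ) : ℂ) * ∏ i : Fin (d + 1), A (σ (pos i)) (σ (pos' i)) with hF
  set Φ : (Fin (d + 1) × Bool) × Fin (2 * d + 1) × Perm (Fin (2 * d)) →
      Perm (Fin (2 * (d + 1))) :=
    fun x => cK x.2.1 * exx x.2.2 * gP' x.1.1 x.1.2 with hΦ
  have happ : ∀ q b k τ y, Φ ((q, b), k, τ) y = cK k (exx τ (gP' q b y)) :=
    fun q b k τ y => rfl
  -- evaluation of Φ at the two special positions
  have hPz : ∀ q b k τ, Φ ((q, b), k, τ) (if b then pos' q else pos q) = 0 := by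
    rintro q b k τ
    cases b
    · rw [if_neg (by simp), happ, gP'_pos, if_neg (by simp), Equiv.swap_apply_right, pos_zero,
        exx_zero, cK_zero]
    · rw [if_pos rfl, happ, gP'_pos', if_pos ⟨rfl, rfl⟩, Equiv.swap_apply_right, pos_zero,
        exx_zero, cK_zero]
  have hPo : ∀ q b k τ, Φ ((q, b), k, τ) (if b then pos q else pos' q) = k.succ := by
    rintro q b k τ
    cases b
    · rw [if_neg (by simp), happ, gP'_pos', if_neg (by simp), Equiv.swap_apply_right, pos'_zero,
        exx_one, cK_one]
    · rw [if_pos rfl, happ, gP'_pos, if_pos ⟨rfl, rfl⟩, Equiv.swap_apply_right, pos'_zero,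
        exx_one, cK_one]
  have hbij : Function.Bijective Φ := by
    rw [Fintype.bijective_iff_injective_and_card]
    constructor
    · rintro ⟨⟨q, b⟩, k, τ⟩ ⟨⟨q', b'⟩, k', τ'⟩ h
      have h0 : (if b then pos' q else pos q) = (if b' then pos' q' else pos q') := by
        apply (Φ ((q, b), k, τ)).injective
        rw [hPz q b k τ, h, hPz q' b' k' τ']
      have hqb : q = q' ∧ b = b' := by
        have := congrArg Fin.val h0
        cases b <;> cases b' <;> simp at this <;>
          first
            | exact ⟨Fin.ext (by omega), rfl⟩
            | omega
      obtain ⟨rfl, rfl⟩ := hqb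
      have hk : k = k' := by
        have h1 : (Fin.succ k : Fin (2 * (d + 1))) = k'.succ := by
          rw [← hPo q b k τ, h, hPo q b k' τ']
        exact Fin.succ_injective _ h1
      subst hk
      have hτ : exx τ = exx τ' := by
        have h2 : cK k * exx τ * gP' q b = cK k * exx τ' * gP' q b := h
        exact mul_left_cancel (mul_right_cancel h2)
      have : τ = τ' := exx_injective hτ
      subst this; rfl
    · simp only [Fintype.card_prod, Fintype.card_perm, Fintype.card_fin, Fintype.card_bool]
      rw [show 2 * (d + 1) = 2 * d + 1 + 1 from by omega, Nat.factorial_succ,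
        Nat.factorial_succ]
      ring
  -- the key term computation
  have key : ∀ (q : Fin (d + 1)) (b : Bool) (k : Fin (2 * d + 1)) (τ : Perm (Fin (2 * d))),
      F (Φ ((q, b), k, τ)) = (-1) ^ (k : ℕ) * A 0 k.succ *
        (((Equiv.Perm.sign τ : ℤ) : ℂ) *
          ∏ i : Fin d,
            A ((k.succAbove (τ ⟨2 * i.val, by have := i.isLt; omega⟩)).succ)
              ((k.succAbove (τ ⟨2 * i.val + 1, by have := i.isLt; omega⟩)).succ)) := by
    intro q b k τ
    -- sign
    have hsign : ((Equiv.Perm.sign (Φ ((q, b), k, τ)) : ℤ) : ℂ) =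
        (if b then (-1 : ℂ) else 1) * ((-1) ^ (k : ℕ) * ((Equiv.Perm.sign τ : ℤ) : ℂ)) := by
      have hs : Equiv.Perm.sign (Φ ((q, b), k, τ)) =
          (-1) ^ (k : ℕ) * Equiv.Perm.sign τ * (if b then -1 else 1) := by
        show Equiv.Perm.sign (cK k * exx τ * gP' q b) = _
        rw [Equiv.Perm.sign_mul, Equiv.Perm.sign_mul, sign_cK, sign_exx, sign_gP']
      rw [hs]
      cases b
      · simp only [if_neg (Bool.false_ne_true), ite_false, mul_one, Units.val_mul,
          Units.val_pow_eq_pow_val]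
        push_cast
        ring
      · simp only [ite_true, Units.val_mul, Units.val_pow_eq_pow_val]
        push_cast
        ring
    -- product over blocks
    have hstep : ∀ i : Fin (d + 1),
        A (Φ ((q, b), k, τ) (pos i)) (Φ ((q, b), k, τ) (pos' i)) =
          (if b = true ∧ i = q then (-1 : ℂ) else 1) *
            (fun j => A ((cK k) (exx τ (pos j)))
              ((cK k) (exx τ (pos' j)))) (Equiv.swap 0 q i) := by
      intro i
      rw [happ, happ, gP'_pos, gP'_pos']
      by_cases h : b = true ∧ i = q
      · rw [if_pos h, if_pos h, if_pos h]
        simp only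
        rw [hA]
        ring
      · rw [if_neg h, if_neg h, if_neg h, one_mul]
    have hprod : ∏ i : Fin (d + 1),
        A (Φ ((q, b), k, τ) (pos i)) (Φ ((q, b), k, τ) (pos' i)) =
        (if b then (-1 : ℂ) else 1) *
          ∏ i : Fin (d + 1), A ((cK k) (exx τ (pos i))) ((cK k) (exx τ (pos' i))) := by
      rw [Finset.prod_congr rfl fun i _ => hstep i, Finset.prod_mul_distrib]
      congr 1
      · cases b
        · simp
        · have hi : ∀ i : Fin (d + 1),
              (if (true = true ∧ i = q) then (-1 : ℂ) else 1) = if i = q then -1 else 1 :=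
            fun i => by simp
          have h2 : ∏ i : Fin (d + 1), (if (true = true ∧ i = q) then (-1 : ℂ) else 1) =
              ∏ i : Fin (d + 1), (if i = q then (-1 : ℂ) else 1) :=
            Finset.prod_congr rfl fun i _ => hi i
          rw [h2]
          simp
      · exact Equiv.prod_comp (Equiv.swap 0 q)
          (fun j => A ((cK k) (exx τ (pos j))) ((cK k) (exx τ (pos' j))))
    -- the inner product
    have hpos_succ : ∀ i : Fin d, pos (i.succ) =
        (((⟨2 * i.val, by have := i.isLt; omega⟩ : Fin (2 * d))).succ.succ
          : Fin (2 * (d + 1))) :=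
      fun i => Fin.ext (by simp only [Fin.val_succ, pos_val]; omega)
    have hpos'_succ : ∀ i : Fin d, pos' (i.succ) =
        (((⟨2 * i.val + 1, by have := i.isLt; omega⟩ : Fin (2 * d))).succ.succ
          : Fin (2 * (d + 1))) :=
      fun i => Fin.ext (by simp only [Fin.val_succ, pos'_val]; omega)
    have hinner : ∏ i : Fin (d + 1),
        A ((cK k) (exx τ (pos i))) ((cK k) (exx τ (pos' i))) =
        A 0 k.succ * ∏ i : Fin d,
          A ((k.succAbove (τ ⟨2 * i.val, by have := i.isLt; omega⟩)).succ)
            ((k.succAbove (τ ⟨2 * i.val + 1, by have := i.isLt; omega⟩)).succ) := by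
      rw [Fin.prod_univ_succ]
      congr 1
      · rw [pos_zero, pos'_zero, exx_zero, exx_one, cK_zero, cK_one]
      · refine Finset.prod_congr rfl fun i _ => ?_
        rw [hpos_succ, hpos'_succ, exx_ss, exx_ss, cK_ss, cK_ss]
    rw [hF]
    simp only
    rw [hsign, hprod, hinner]
    cases b
    · norm_num
      ring
    · norm_num
      ring
  -- assembling
  have hPfA : Pf A = ((2 : ℂ) ^ (d + 1) * ((d + 1).factorial : ℂ))⁻¹ * ∑ σ, F σ := rfl
  have hsum : ∑ σ, F σ = ∑ x, F (Φ x) :=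
    (Fintype.sum_bijective Φ hbij (fun x => F (Φ x)) F fun x => rfl).symm
  have hsum2 : ∑ x, F (Φ x) = (((d + 1) * 2 : ℕ) : ℂ) *
      ∑ k : Fin (2 * d + 1), (-1) ^ (k : ℕ) * A 0 k.succ *
        ∑ τ : Perm (Fin (2 * d)), ((Equiv.Perm.sign τ : ℤ) : ℂ) *
          ∏ i : Fin d,
            A ((k.succAbove (τ ⟨2 * i.val, by have := i.isLt; omega⟩)).succ)
              ((k.succAbove (τ ⟨2 * i.val + 1, by have := i.isLt; omega⟩)).succ) := by
    rw [Fintype.sum_prod_type]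
    have hthis : ∀ qb : Fin (d + 1) × Bool, ∑ y : Fin (2 * d + 1) × Perm (Fin (2 * d)),
        F (Φ (qb, y)) = ∑ k : Fin (2 * d + 1), (-1) ^ (k : ℕ) * A 0 k.succ *
          ∑ τ : Perm (Fin (2 * d)), ((Equiv.Perm.sign τ : ℤ) : ℂ) *
            ∏ i : Fin d,
              A ((k.succAbove (τ ⟨2 * i.val, by have := i.isLt; omega⟩)).succ)
                ((k.succAbove (τ ⟨2 * i.val + 1, by have := i.isLt; omega⟩)).succ) := by
      rintro ⟨q, b⟩
      rw [Fintype.sum_prod_type]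
      refine Finset.sum_congr rfl fun k _ => ?_
      rw [Finset.mul_sum]
      exact Finset.sum_congr rfl fun τ _ => key q b k τ
    rw [Finset.sum_congr rfl fun qb _ => hthis qb, Finset.sum_const, Finset.card_univ,
      Fintype.card_prod, Fintype.card_fin, Fintype.card_bool, nsmul_eq_mul]
    try push_cast
    try ring
  have hconst : ((2 : ℂ) ^ (d + 1) * ((d + 1).factorial : ℂ))⁻¹ * (((d + 1) * 2 : ℕ) : ℂ) =
      ((2 : ℂ) ^ d * (d.factorial : ℂ))⁻¹ := by
    have h1 : ((2 : ℂ) ^ (d + 1) * ((d + 1).factorial : ℂ)) =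
        ((2 : ℂ) ^ d * (d.factorial : ℂ)) * (((d + 1) * 2 : ℕ) : ℂ) := by
      push_cast [Nat.factorial_succ]; ring
    have h2 : (((d + 1) * 2 : ℕ) : ℂ) ≠ 0 := Nat.cast_ne_zero.mpr (by omega)
    rw [h1, mul_inv, mul_assoc, inv_mul_cancel₀ h2, mul_one]
  have hPfm : ∀ k : Fin (2 * d + 1),
      Pf (A.submatrix (fun j : Fin (2 * d) => ((k.succAbove j).succ : Fin (2 * (d + 1))))
        (fun j => (k.succAbove j).succ)) =
      ((2 : ℂ) ^ d * (d.factorial : ℂ))⁻¹ *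
        ∑ τ : Perm (Fin (2 * d)), ((Equiv.Perm.sign τ : ℤ) : ℂ) *
          ∏ i : Fin d,
            A ((k.succAbove (τ ⟨2 * i.val, by have := i.isLt; omega⟩)).succ)
              ((k.succAbove (τ ⟨2 * i.val + 1, by have := i.isLt; omega⟩)).succ) :=
    fun k => rfl
  rw [hPfA, hsum, hsum2, ← mul_assoc, hconst, Finset.mul_sum]
  refine Finset.sum_congr rfl fun k _ => ?_
  rw [hPfm k]
  ring

end recmain

section SchurKey
open Polynomial

/-- Key partial-fraction identity, `n` odd. -/
lemma schur_key (n : ℕ) (hn : Odd n) (x : Fin n → ℂ) (y : ℂ)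
    (hinj : Function.Injective x) (h0 : ∀ l, x l ≠ 0) (h1 : ∀ k l, x k * x l ≠ 1)
    (hy : ∀ l, y * x l ≠ 1) :
    ∑ k, ((y - x k) / (1 - y * x k)) *
        ∏ l ∈ Finset.univ.erase k, ((1 - x k * x l) / (x k - x l)) =
      ∏ l, (y - x l) / (1 - y * x l) := by
  classical
  have hne : ∀ {k l : Fin n}, k ≠ l → x k - x l ≠ 0 :=
    fun {k l} h => sub_ne_zero.mpr (fun e => h (hinj e))
  set c : Fin n → ℂ := fun k => ∏ l ∈ Finset.univ.erase k, ((1 - x k * x l) / (x k - x l))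
    with hc
  set G : Polynomial ℂ :=
    (∑ k, C (c k) * (X - C (x k)) * ∏ l ∈ Finset.univ.erase k, (1 - C (x l) * X)) -
      ∏ k, (X - C (x k)) with hG
  -- roots at the inverses
  have hroot : ∀ m : Fin n, G.eval (x m)⁻¹ = 0 := by
    intro m
    have hGe : G.eval (x m)⁻¹ =
        (∑ k, c k * ((x m)⁻¹ - x k) * ∏ l ∈ Finset.univ.erase k, (1 - x l * (x m)⁻¹)) -
          ∏ k, ((x m)⁻¹ - x k) := by
      simp [hG, Polynomial.eval_finset_sum, Polynomial.eval_prod]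
    rw [hGe]
    rw [Finset.sum_eq_single m]
    · have hsplit : ∏ k, ((x m)⁻¹ - x k) =
          ((x m)⁻¹ - x m) * ∏ l ∈ Finset.univ.erase m, ((x m)⁻¹ - x l) :=
        (Finset.mul_prod_erase Finset.univ _ (Finset.mem_univ m)).symm
      rw [hsplit]
      have hfac : ∀ l ∈ Finset.univ.erase m,
          ((1 - x m * x l) / (x m - x l)) * (1 - x l * (x m)⁻¹) = (x m)⁻¹ - x l := by
        intro l hl
        have hlm : l ≠ m := Finset.ne_of_mem_erase hl
        have hd : x m - x l ≠ 0 := hne (Ne.symm hlm)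
        have h0m : x m ≠ 0 := h0 m
        field_simp
        try ring
      have : c m * ∏ l ∈ Finset.univ.erase m, (1 - x l * (x m)⁻¹) =
          ∏ l ∈ Finset.univ.erase m, ((x m)⁻¹ - x l) := by
        rw [hc]
        rw [← Finset.prod_mul_distrib]
        exact Finset.prod_congr rfl hfac
      rw [mul_right_comm, this]
      ring
    · intro k _ hk
      have hm : m ∈ Finset.univ.erase k := Finset.mem_erase.mpr ⟨Ne.symm hk, Finset.mem_univ m⟩
      rw [Finset.prod_eq_zero hm (by rw [mul_inv_cancel₀ (h0 m)]; ring)]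
      ring
    · intro h; exact absurd (Finset.mem_univ m) h
  -- degree bound
  have hdeg : G.natDegree ≤ n := by
    have h2 : (∏ k : Fin n, (X - C (x k))).natDegree ≤ n := by
      refine le_trans (Polynomial.natDegree_prod_le _ _) ?_
      simp [Polynomial.natDegree_X_sub_C]
    have h3 : (∑ k, C (c k) * (X - C (x k)) *
        ∏ l ∈ Finset.univ.erase k, (1 - C (x l) * X)).natDegree ≤ n := by
      refine Polynomial.natDegree_sum_le_of_forall_le _ _ fun k _ => ?_
      refine le_trans (Polynomial.natDegree_mul_le) ?_
      have hb1 : (C (c k) * (X - C (x k))).natDegree ≤ 1 := by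
        refine le_trans (Polynomial.natDegree_mul_le) ?_
        simp [Polynomial.natDegree_X_sub_C]
      have hb2 : (∏ l ∈ Finset.univ.erase k, (1 - C (x l) * X)).natDegree ≤ n - 1 := by
        refine le_trans (Polynomial.natDegree_prod_le _ _) ?_
        have : ∀ l ∈ Finset.univ.erase k, (1 - C (x l) * X).natDegree ≤ 1 := by
          intro l _
          have : (1 - C (x l) * X) = C (-(x l)) * X + C 1 := by
            simp [C_neg]; ring
          rw [this]
          exact Polynomial.natDegree_linear_le
        refine le_trans (Finset.sum_le_card_nsmul _ _ 1 this) ?_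
        simp [Finset.card_erase_of_mem]
      have hn1 : 1 ≤ n := hn.pos
      omega
    exact le_trans (Polynomial.natDegree_sub_le _ _) (by omega)
  -- divisibility
  have hxinv_inj : Function.Injective fun m : Fin n => (x m)⁻¹ := by
    intro a b h
    exact hinj (by
      have := congrArg (·⁻¹) h
      simpa using this)
  set P : Polynomial ℂ := ∏ m : Fin n, (X - C ((x m)⁻¹)) with hP
  have hPdvd : P ∣ G := by
    refine Finset.prod_dvd_of_coprime ?_ ?_
    · intro a _ b _ hab
      exact Polynomial.pairwise_coprime_X_sub_C hxinv_inj hab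
    · intro m _
      exact Polynomial.dvd_iff_isRoot.mpr (hroot m)
  obtain ⟨qq, hqq⟩ := hPdvd
  have hPmonic : P.Monic := Polynomial.monic_prod_of_monic _ _ fun m _ =>
    Polynomial.monic_X_sub_C _
  have hPdeg : P.natDegree = n := by
    rw [hP, Polynomial.natDegree_prod _ _ fun m _ => Polynomial.X_sub_C_ne_zero _]
    simp [Polynomial.natDegree_X_sub_C]
  -- G = 0
  have hG0 : G = 0 := by
    rcases eq_or_ne qq 0 with rfl | hqqne
    · simpa using hqq
    have hqdeg : qq.natDegree = 0 := by
      have h' : G.natDegree = P.natDegree + qq.natDegree := by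
        rw [hqq]; exact Polynomial.natDegree_mul hPmonic.ne_zero hqqne
      omega
    obtain ⟨cc, rfl⟩ : ∃ cc, qq = C cc := ⟨qq.coeff 0, (Polynomial.eq_C_of_natDegree_eq_zero hqdeg)⟩
    -- evaluations at 1 and -1
    have hx1 : ∀ l, (1 : ℂ) - x l ≠ 0 := by
      intro l h
      have : x l = 1 := by linear_combination -h
      exact h1 l l (by rw [this]; ring)
    have hx1' : ∀ l, (1 : ℂ) + x l ≠ 0 := by
      intro l h
      have : x l = -1 := by linear_combination h
      exact h1 l l (by rw [this]; ring)
    have prodneg : ∀ f : Fin n → ℂ, ∏ l, (-1 * f l) = - ∏ l, f l := by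
      intro f
      rw [Finset.prod_mul_distrib, Finset.prod_const, Finset.card_univ, Fintype.card_fin,
        hn.neg_one_pow]
      ring
    have he1 : G.eval 1 = (∏ l, (1 - x l)) * ((∑ k, c k) - 1) := by
      have : G.eval 1 = (∑ k, c k * (1 - x k) * ∏ l ∈ Finset.univ.erase k, (1 - x l)) -
          ∏ k, (1 - x k) := by
        simp [hG, Polynomial.eval_finset_sum, Polynomial.eval_prod]
      rw [this]
      have hterm : ∀ k : Fin n, c k * (1 - x k) * ∏ l ∈ Finset.univ.erase k, (1 - x l) =
          c k * ∏ l, (1 - x l) := by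
        intro k
        rw [mul_assoc, Finset.mul_prod_erase Finset.univ (fun l => (1:ℂ) - x l)
          (Finset.mem_univ k)]
      rw [Finset.sum_congr rfl fun k _ => hterm k, ← Finset.sum_mul]
      ring
    have he2 : G.eval (-1) = (∏ l, (1 + x l)) * (1 - ∑ k, c k) := by
      have hh : G.eval (-1) = (∑ k, c k * (-1 - x k) * ∏ l ∈ Finset.univ.erase k, (1 + x l)) -
          ∏ k, (-1 - x k) := by
        simp [hG, Polynomial.eval_finset_sum, Polynomial.eval_prod]
      rw [hh]
      have hterm : ∀ k : Fin n, c k * (-1 - x k) * ∏ l ∈ Finset.univ.erase k, (1 + x l) =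
          -(c k * ∏ l, (1 + x l)) := by
        intro k
        have : (-1 : ℂ) - x k = -(1 + x k) := by ring
        rw [this, ← Finset.mul_prod_erase Finset.univ (fun l => 1 + x l) (Finset.mem_univ k)]
        ring
      have hneg : ∏ k : Fin n, (-1 - x k) = -∏ k, (1 + x k) := by
        have hh2 : ∀ k : Fin n, (-1 : ℂ) - x k = (-1) * (1 + x k) := fun k => by ring
        rw [Finset.prod_congr rfl fun k _ => hh2 k, prodneg]
      rw [Finset.sum_congr rfl fun k _ => hterm k, Finset.sum_neg_distrib, ← Finset.sum_mul,
        hneg]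
      ring
    -- evaluations of P at 1 and -1
    have hq1 : ∏ m : Fin n, ((1:ℂ) - (x m)⁻¹) = -(∏ l, (1 - x l)) * ∏ l, (x l)⁻¹ := by
      have hh3 : ∀ m : Fin n, (1:ℂ) - (x m)⁻¹ = (-1) * ((1 - x m) * (x m)⁻¹) := by
        intro m
        have := h0 m
        field_simp
        ring
      rw [Finset.prod_congr rfl fun m _ => hh3 m, prodneg, Finset.prod_mul_distrib]
      ring
    have hq2 : ∏ m : Fin n, ((-1:ℂ) - (x m)⁻¹) = -(∏ l, (1 + x l)) * ∏ l, (x l)⁻¹ := by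
      have hh4 : ∀ m : Fin n, (-1:ℂ) - (x m)⁻¹ = (-1) * ((1 + x m) * (x m)⁻¹) := by
        intro m
        have := h0 m
        field_simp
        ring
      rw [Finset.prod_congr rfl fun m _ => hh4 m, prodneg, Finset.prod_mul_distrib]
      ring
    have hstar : (∏ l, (1 + x l)) * G.eval 1 + (∏ l, (1 - x l)) * G.eval (-1) = 0 := by
      rw [he1, he2]; ring
    have hPe1 : G.eval 1 = cc * ∏ m, ((1:ℂ) - (x m)⁻¹) := by
      rw [hqq]
      simp [hP, Polynomial.eval_prod]
      ring
    have hPe2 : G.eval (-1) = cc * ∏ m, ((-1:ℂ) - (x m)⁻¹) := by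
      rw [hqq]
      simp [hP, Polynomial.eval_prod]
      ring
    have hbr : cc * ((∏ l, (1 + x l)) * (∏ m, ((1:ℂ) - (x m)⁻¹)) +
        (∏ l, (1 - x l)) * (∏ m, ((-1:ℂ) - (x m)⁻¹))) = 0 := by
      rw [← hstar, hPe1, hPe2]; ring
    have hbrval : (∏ l, (1 + x l)) * (∏ m, ((1:ℂ) - (x m)⁻¹)) +
        (∏ l, (1 - x l)) * (∏ m, ((-1:ℂ) - (x m)⁻¹)) =
        -2 * (∏ l, (1 + x l)) * (∏ l, (1 - x l)) * ∏ l, (x l)⁻¹ := by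
      rw [hq1, hq2]; ring
    have hnz : (-2 : ℂ) * (∏ l, (1 + x l)) * (∏ l, (1 - x l)) * (∏ l, (x l)⁻¹) ≠ 0 := by
      apply mul_ne_zero
      apply mul_ne_zero
      apply mul_ne_zero
      · norm_num
      · exact Finset.prod_ne_zero_iff.mpr fun l _ => hx1' l
      · exact Finset.prod_ne_zero_iff.mpr fun l _ => hx1 l
      · exact Finset.prod_ne_zero_iff.mpr fun l _ => inv_ne_zero (h0 l)
    rw [hbrval] at hbr
    have hcc : cc = 0 := by
      rcases mul_eq_zero.mp hbr with h | h
      · exact h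
      · exact absurd h hnz
    rw [hqq, hcc]
    simp
  -- evaluate the identity G = 0 at y
  have hyy : ∀ l, (1 : ℂ) - y * x l ≠ 0 := fun l h => hy l (by linear_combination -h)
  have heval : (∑ k, c k * (y - x k) * ∏ l ∈ Finset.univ.erase k, (1 - x l * y)) =
      ∏ k, (y - x k) := by
    have := congrArg (Polynomial.eval y) hG0
    rw [hG] at this
    simpa [Polynomial.eval_finset_sum, Polynomial.eval_prod, sub_eq_zero] using this
  -- divide out
  rw [Finset.prod_div_distrib, eq_div_iff (Finset.prod_ne_zero_iff.mpr fun l _ => hyy l),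
    ← heval, Finset.sum_mul]
  refine Finset.sum_congr rfl fun k _ => ?_
  have hcom : ∏ l ∈ Finset.univ.erase k, ((1:ℂ) - x l * y) =
      ∏ l ∈ Finset.univ.erase k, ((1:ℂ) - y * x l) :=
    Finset.prod_congr rfl fun l _ => by ring
  rw [hcom, ← Finset.mul_prod_erase Finset.univ (fun l => (1:ℂ) - y * x l) (Finset.mem_univ k)]
  have hb : (1:ℂ) - y * x k ≠ 0 := hyy k
  have hdm : (y - x k) / (1 - y * x k) * (1 - y * x k) = y - x k := div_mul_cancel₀ _ hb
  linear_combination (c k * ∏ l ∈ Finset.univ.erase k, ((1:ℂ) - y * x l)) * hdm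

end SchurKey

lemma prod_Ioi_split (n : ℕ) (F : Fin (n + 1) → Fin (n + 1) → ℂ) :
    ∏ i : Fin (n + 1), ∏ j ∈ Finset.Ioi i, F i j =
      (∏ l : Fin n, F 0 l.succ) *
        ∏ i : Fin n, ∏ j ∈ Finset.Ioi i, F i.succ j.succ := by
  rw [Fin.prod_univ_succ]
  congr 1
  · exact Fin.prod_Ioi_zero (F 0)
  · exact Finset.prod_congr rfl fun i _ => Fin.prod_Ioi_succ (F i.succ) i

lemma card_filter_lt (m : ℕ) (k : Fin (m + 1)) :
    (Finset.univ.filter fun l : Fin m => (l : ℕ) < (k : ℕ)).card = (k : ℕ) := by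
  rw [← Finset.card_range (k : ℕ)]
  apply Finset.card_bij (fun (l : Fin m) _ => (l : ℕ))
  · intro a ha
    simp only [Finset.mem_filter] at ha
    simpa using ha.2
  · intro a ha b hb hab
    exact Fin.ext hab
  · intro b hb
    simp only [Finset.mem_range] at hb
    have hbm : b < m := by have := k.isLt; omega
    exact ⟨⟨b, hbm⟩, by simp [hb], rfl⟩

lemma succAbove_lt_self_iff {m : ℕ} (k : Fin (m + 1)) (l : Fin m) :
    k.succAbove l < k ↔ (l : ℕ) < (k : ℕ) := by
  rcases lt_or_ge (l.castSucc) k with h | h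
  · rw [Fin.succAbove_of_castSucc_lt _ _ h]
    have h' : (l : ℕ) < (k : ℕ) := by
      rw [Fin.lt_iff_val_lt_val] at h; simpa using h
    simp [h, h']
  · rw [Fin.succAbove_of_le_castSucc _ _ h]
    rw [Fin.le_iff_val_le_val] at h
    simp only [Fin.coe_castSucc] at h
    constructor
    · intro hh
      rw [Fin.lt_iff_val_lt_val] at hh
      simp only [Fin.val_succ] at hh
      omega
    · intro hh
      omega

lemma hconv (r : ℕ) (G : Fin r → Fin r → ℂ) :
    ∏ i : Fin r, ∏ j ∈ Finset.Ioi i, G i j =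
      ∏ p ∈ Finset.univ.filter (fun p : Fin r × Fin r => p.1 < p.2), G p.1 p.2 := by
  rw [Finset.prod_filter, Fintype.prod_prod_type]
  refine Finset.prod_congr rfl fun i _ => ?_
  rw [← Finset.prod_filter, Finset.filter_lt_eq_Ioi]

/-- removing one index from the pair-product, `F` skew. -/
lemma prod_Ioi_erase (m : ℕ) (F : Fin (m + 1) → Fin (m + 1) → ℂ)
    (hF : ∀ a b, F b a = - F a b) (k : Fin (m + 1)) :
    ∏ i : Fin (m + 1), ∏ j ∈ Finset.Ioi i, F i j =
      ((-1) ^ (k : ℕ) * ∏ l : Fin m, F k (k.succAbove l)) *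
        ∏ i : Fin m, ∏ j ∈ Finset.Ioi i, F (k.succAbove i) (k.succAbove j) := by
  classical
  rw [hconv (m + 1) F, hconv m (fun i j => F (k.succAbove i) (k.succAbove j)),
    ← Finset.prod_filter_mul_prod_filter_not
      (Finset.univ.filter (fun p : Fin (m+1) × Fin (m+1) => p.1 < p.2))
      (fun p => p.1 = k ∨ p.2 = k)]
  congr 1
  · -- pairs containing k
    have hbij : ∏ l : Fin m,
        ((if k.succAbove l < k then (-1 : ℂ) else 1) * F k (k.succAbove l)) =
        ∏ p ∈ (Finset.univ.filter (fun p : Fin (m+1) × Fin (m+1) => p.1 < p.2)).filter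
          (fun p => p.1 = k ∨ p.2 = k), F p.1 p.2 := by
      refine Finset.prod_bij
        (fun (l : Fin m) _ => if k.succAbove l < k then ((k.succAbove l, k) : _ × _)
          else (k, k.succAbove l)) ?_ ?_ ?_ ?_
      · intro l _
        by_cases h : k.succAbove l < k
        · simp only [if_pos h, Finset.mem_filter, Finset.mem_univ, true_and]
          exact ⟨h, by simp⟩
        · have hlt : k < k.succAbove l :=
            lt_of_le_of_ne (not_lt.mp h) (Fin.ne_succAbove k l)
          simp only [if_neg h, Finset.mem_filter, Finset.mem_univ, true_and]
          exact ⟨hlt, by simp⟩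
      · intro a _ b _ hab
        by_cases ha : k.succAbove a < k <;> by_cases hb : k.succAbove b < k <;>
          simp only [if_pos, if_neg, ha, hb] at hab
        · exact Fin.succAbove_right_injective (congrArg Prod.fst hab)
        · exact absurd (congrArg Prod.fst hab) (Fin.succAbove_ne k a)
        · exact absurd (congrArg Prod.fst hab).symm (Fin.succAbove_ne k b)
        · exact Fin.succAbove_right_injective (congrArg Prod.snd hab)
      · rintro ⟨p1, p2⟩ hp
        simp only [Finset.mem_filter, Finset.mem_univ] at hp
        obtain ⟨⟨-, hlt⟩, hor⟩ := hp
        rcases hor with h1 | h2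
        · subst h1
          have hne : p2 ≠ p1 := (ne_of_gt hlt)
          obtain ⟨l, hl⟩ := Fin.exists_succAbove_eq hne
          refine ⟨l, Finset.mem_univ l, ?_⟩
          rw [if_neg (by rw [hl]; exact not_lt.mpr (le_of_lt hlt)), hl]
        · subst h2
          have hne : p1 ≠ p2 := ne_of_lt hlt
          obtain ⟨l, hl⟩ := Fin.exists_succAbove_eq hne
          refine ⟨l, Finset.mem_univ l, ?_⟩
          rw [if_pos (by rw [hl]; exact hlt), hl]
      · intro l _
        by_cases h : k.succAbove l < k
        · simp only [if_pos h]
          rw [hF]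
          ring
        · simp only [if_neg h, one_mul]
    rw [← hbij, Finset.prod_mul_distrib]
    congr 1
    rw [Finset.prod_ite, Finset.prod_const, Finset.prod_const, one_pow, mul_one]
    congr 1
    rw [Finset.filter_congr (fun l _ => by rw [succAbove_lt_self_iff k l]),
      card_filter_lt]
  · -- pairs avoiding k
    refine (Finset.prod_bij
      (fun (p : Fin m × Fin m) _ => ((k.succAbove p.1, k.succAbove p.2) : _ × _))
      ?_ ?_ ?_ ?_).symm
    · rintro ⟨p1, p2⟩ hp
      simp only [Finset.mem_filter, Finset.mem_univ] at hp ⊢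
      refine ⟨⟨trivial, (Fin.strictMono_succAbove k) hp.2⟩, ?_⟩
      push_neg
      exact ⟨Fin.succAbove_ne k p1, Fin.succAbove_ne k p2⟩
    · rintro ⟨a1, a2⟩ _ ⟨b1, b2⟩ _ hab
      have h1 := Fin.succAbove_right_injective (congrArg Prod.fst hab)
      have h2 := Fin.succAbove_right_injective (congrArg Prod.snd hab)
      simp only at h1 h2
      simp [h1, h2]
    · rintro ⟨p1, p2⟩ hp
      simp only [Finset.mem_filter, Finset.mem_univ] at hp
      obtain ⟨⟨-, hlt⟩, hnk⟩ := hp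
      push_neg at hnk
      obtain ⟨l1, hl1⟩ := Fin.exists_succAbove_eq hnk.1
      obtain ⟨l2, hl2⟩ := Fin.exists_succAbove_eq hnk.2
      refine ⟨(l1, l2), ?_, by simp [hl1, hl2]⟩
      simp only [Finset.mem_filter, Finset.mem_univ]
      refine ⟨trivial, ?_⟩
      rw [← hl1, ← hl2] at hlt
      exact (Fin.strictMono_succAbove k).lt_iff_lt.mp hlt
    · intro p _
      rfl


lemma erase_reindex (m : ℕ) (k : Fin (m + 1)) (g : Fin (m + 1) → ℂ) :
    ∏ l : Fin m, g (k.succAbove l) = ∏ j ∈ Finset.univ.erase k, g j := by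
  refine Finset.prod_bij (fun l _ => k.succAbove l) ?_ ?_ ?_ ?_
  · intro l _
    exact Finset.mem_erase.mpr ⟨Fin.succAbove_ne k l, Finset.mem_univ _⟩
  · intro a _ b _ h
    exact Fin.succAbove_right_injective h
  · intro j hj
    obtain ⟨l, hl⟩ := Fin.exists_succAbove_eq (Finset.ne_of_mem_erase hj)
    exact ⟨l, Finset.mem_univ l, hl⟩
  · intro l _
    rfl

theorem schur_ioi (d : ℕ) : ∀ u : Fin (2 * d) → ℂ, Function.Injective u → (∀ j, u j ≠ 0) →
    (∀ j k, u j * u k ≠ 1) →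
    Pf (Matrix.of fun j k : Fin (2 * d) => (u j - u k) / (1 - u j * u k)) =
      ∏ i : Fin (2 * d), ∏ j ∈ Finset.Ioi i, (u i - u j) / (1 - u i * u j) := by
  induction d with
  | zero =>
    intro u _ _ _
    simp [Pf]
  | succ d ih =>
    intro u hinj h0 h1
    have hskew : ∀ i j : Fin (2 * (d + 1)),
        (Matrix.of fun a b : Fin (2 * (d + 1)) => (u a - u b) / (1 - u a * u b)) j i =
          -(Matrix.of fun a b : Fin (2 * (d + 1)) => (u a - u b) / (1 - u a * u b)) i j := by
      intro i j
      simp only [Matrix.of_apply]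
      rw [mul_comm (u j) (u i), ← neg_div, neg_sub]
    rw [pf_rec _ hskew]
    simp only [Matrix.of_apply]
    have hminor : ∀ k : Fin (2 * d + 1),
        Pf ((Matrix.of fun a b : Fin (2 * (d + 1)) =>
            (u a - u b) / (1 - u a * u b)).submatrix
          (fun j : Fin (2 * d) => ((k.succAbove j).succ : Fin (2 * (d + 1))))
          (fun j => (k.succAbove j).succ)) =
        ∏ i : Fin (2 * d), ∏ j ∈ Finset.Ioi i,
          (u (k.succAbove i).succ - u (k.succAbove j).succ) /
            (1 - u (k.succAbove i).succ * u (k.succAbove j).succ) := by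
      intro k
      have hrw : (Matrix.of fun a b : Fin (2 * (d + 1)) =>
          (u a - u b) / (1 - u a * u b)).submatrix
            (fun j : Fin (2 * d) => ((k.succAbove j).succ : Fin (2 * (d + 1))))
            (fun j => (k.succAbove j).succ) =
          Matrix.of (fun a b : Fin (2 * d) =>
            (u (k.succAbove a).succ - u (k.succAbove b).succ) /
              (1 - u (k.succAbove a).succ * u (k.succAbove b).succ)) := rfl
      rw [hrw]
      exact ih (fun j => u (k.succAbove j).succ)
        (fun a b h => Fin.succAbove_right_injective
          (Fin.succ_injective _ (hinj h)))
        (fun j => h0 _) (fun j k' => h1 _ _)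
    have hRHS : (∏ i : Fin (2 * (d + 1)), ∏ j ∈ Finset.Ioi i,
        (u i - u j) / (1 - u i * u j)) =
        (∏ l : Fin (2 * d + 1), (u 0 - u l.succ) / (1 - u 0 * u l.succ)) *
          ∏ i : Fin (2 * d + 1), ∏ j ∈ Finset.Ioi i,
            (u i.succ - u j.succ) / (1 - u i.succ * u j.succ) := by
      exact prod_Ioi_split (2 * d + 1) (fun i j => (u i - u j) / (1 - u i * u j))
    have hskew' : ∀ a b : Fin (2 * d + 1),
        (u b.succ - u a.succ) / (1 - u b.succ * u a.succ) =
          -((u a.succ - u b.succ) / (1 - u a.succ * u b.succ)) := by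
      intro a b
      rw [mul_comm (u b.succ) (u a.succ), ← neg_div, neg_sub]
    have hQ : ∀ k : Fin (2 * d + 1), (∏ i : Fin (2 * d + 1), ∏ j ∈ Finset.Ioi i,
        (u i.succ - u j.succ) / (1 - u i.succ * u j.succ)) =
        ((-1) ^ (k : ℕ) * ∏ l : Fin (2 * d),
            (u k.succ - u (k.succAbove l).succ) /
              (1 - u k.succ * u (k.succAbove l).succ)) *
          ∏ i : Fin (2 * d), ∏ j ∈ Finset.Ioi i,
            (u (k.succAbove i).succ - u (k.succAbove j).succ) /
              (1 - u (k.succAbove i).succ * u (k.succAbove j).succ) := by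
      intro k
      exact prod_Ioi_erase (2 * d)
        (fun i j => (u i.succ - u j.succ) / (1 - u i.succ * u j.succ)) hskew' k
    have key : ∑ k : Fin (2 * d + 1), ((u 0 - u k.succ) / (1 - u 0 * u k.succ)) *
        ∏ j ∈ Finset.univ.erase k,
          ((1 - u k.succ * u j.succ) / (u k.succ - u j.succ)) =
        ∏ l : Fin (2 * d + 1), (u 0 - u l.succ) / (1 - u 0 * u l.succ) := by
      exact schur_key (2 * d + 1) ⟨d, by ring⟩ (fun l => u l.succ) (u 0)
        (fun a b h => Fin.succ_injective _ (hinj h)) (fun l => h0 _)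
        (fun k' l => h1 _ _) (fun l => h1 _ _)
    rw [Finset.sum_congr rfl (fun k _ => by rw [hminor k]), hRHS, ← key, Finset.sum_mul]
    refine Finset.sum_congr rfl fun k _ => ?_
    rw [hQ k]
    have hE : (∏ j ∈ Finset.univ.erase k,
        ((1 - u k.succ * u j.succ) / (u k.succ - u j.succ))) *
        (∏ l : Fin (2 * d), (u k.succ - u (k.succAbove l).succ) /
          (1 - u k.succ * u (k.succAbove l).succ)) = 1 := by
      rw [erase_reindex (2 * d) k
        (fun j => (u k.succ - u j.succ) / (1 - u k.succ * u j.succ)),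
        ← Finset.prod_mul_distrib]
      rw [Finset.prod_eq_one]
      intro j hj
      have hjk : j ≠ k := Finset.ne_of_mem_erase hj
      have hnum : (1 : ℂ) - u k.succ * u j.succ ≠ 0 := by
        intro h
        exact h1 k.succ j.succ (by linear_combination -h)
      have hden : u k.succ - u j.succ ≠ 0 := by
        intro h
        exact hjk (Fin.succ_injective _ (hinj (by linear_combination h))).symm
      field_simp
    set ffk := (u 0 - u k.succ) / (1 - u 0 * u k.succ) with hffk
    set Tk := ∏ i : Fin (2 * d), ∏ j ∈ Finset.Ioi i,
      (u (k.succAbove i).succ - u (k.succAbove j).succ) /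
        (1 - u (k.succAbove i).succ * u (k.succAbove j).succ) with hTk
    set Ek := ∏ j ∈ Finset.univ.erase k,
      ((1 - u k.succ * u j.succ) / (u k.succ - u j.succ)) with hEk
    set Pk := ∏ l : Fin (2 * d), (u k.succ - u (k.succAbove l).succ) /
      (1 - u k.succ * u (k.succAbove l).succ) with hPk
    linear_combination (-1 : ℂ) * (-1) ^ (k : ℕ) * ffk * Tk * hE

section Perturb
open Filter Topology

lemma ev_ne (c : ℂ) : ∀ᶠ ε in 𝓝[≠] (0 : ℂ), ε ≠ c := by
  rcases eq_or_ne c 0 with rfl | hc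
  · exact eventually_mem_nhdsWithin
  · exact nhdsWithin_le_nhds (eventually_ne_nhds hc.symm)

lemma ev_not_root (p : Polynomial ℂ) (hp : p ≠ 0) :
    ∀ᶠ ε in 𝓝[≠] (0 : ℂ), ¬ p.IsRoot ε := by
  have hfin : {x | p.IsRoot x}.Finite := Polynomial.finite_setOf_isRoot hp
  have : ∀ᶠ ε in 𝓝[≠] (0 : ℂ), ∀ c ∈ hfin.toFinset, ε ≠ c :=
    (Filter.eventually_all_finset _).mpr fun c _ => ev_ne c
  filter_upwards [this] with ε hε hroot
  exact hε ε (by simpa using hroot) rfl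

noncomputable def FuD (d : ℕ) (w : Fin (2 * d) → ℂ) : ℂ :=
  Pf (Matrix.of fun j k : Fin (2 * d) => (w j - w k) / (1 - w j * w k))

noncomputable def GuD (d : ℕ) (w : Fin (2 * d) → ℂ) : ℂ :=
  ∏ i : Fin (2 * d), ∏ j ∈ Finset.Ioi i, (w i - w j) / (1 - w i * w j)


/-- **Schur's Pfaffian identity.** -/
theorem statement0 (d : ℕ) (u : Fin (2 * d) → ℂ)
    (hu : ∀ j k : Fin (2 * d), j ≠ k → u j * u k ≠ 1) :
    Pf (Matrix.of fun j k : Fin (2 * d) => (u j - u k) / (1 - u j * u k)) =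
      ∏ p ∈ Finset.univ.filter (fun p : Fin (2 * d) × Fin (2 * d) => p.1 < p.2),
        (u p.1 - u p.2) / (1 - u p.1 * u p.2) := by
  classical
  rw [← hconv (2 * d) (fun a b => (u a - u b) / (1 - u a * u b))]
  show FuD d u = GuD d u
  set a : Fin (2 * d) → ℂ := fun j => (((j : ℕ) + 1 : ℕ) : ℂ) with ha
  have ha0 : ∀ j, a j ≠ 0 := fun j => Nat.cast_ne_zero.mpr (Nat.succ_ne_zero _)
  have hainj : ∀ j k : Fin (2 * d), j ≠ k → a j - a k ≠ 0 := by
    intro j k hjk h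
    have h' : (((j : ℕ) + 1 : ℕ) : ℂ) = (((k : ℕ) + 1 : ℕ) : ℂ) := by
      rw [ha] at h; linear_combination h
    exact hjk (Fin.ext (by exact_mod_cast Nat.succ_injective (Nat.cast_injective h')))
  set v : ℂ → Fin (2 * d) → ℂ := fun ε j => u j + ε * a j with hv
  -- eventually all genericity conditions hold
  have e1 : ∀ᶠ ε in 𝓝[≠] (0 : ℂ), ∀ j k : Fin (2 * d), j ≠ k → v ε j ≠ v ε k := by
    refine eventually_all.mpr fun j => eventually_all.mpr fun k => ?_
    rcases eq_or_ne j k with rfl | hjk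
    · exact Filter.Eventually.of_forall fun ε h => absurd rfl h
    · filter_upwards [ev_ne ((u k - u j) / (a j - a k))] with ε hε _ heq
      apply hε
      rw [eq_div_iff (hainj j k hjk)]
      simp only [hv] at heq
      linear_combination heq
  have e2 : ∀ᶠ ε in 𝓝[≠] (0 : ℂ), ∀ j, v ε j ≠ 0 := by
    refine eventually_all.mpr fun j => ?_
    filter_upwards [ev_ne (-(u j) / a j)] with ε hε h0'
    apply hε
    rw [eq_div_iff (ha0 j)]
    simp only [hv] at h0'
    linear_combination h0'
  have e3 : ∀ᶠ ε in 𝓝[≠] (0 : ℂ), ∀ j k, v ε j * v ε k ≠ 1 := by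
    refine eventually_all.mpr fun j => eventually_all.mpr fun k => ?_
    set p : Polynomial ℂ := Polynomial.C (u j * u k - 1) +
      Polynomial.C (u j * a k + u k * a j) * Polynomial.X +
      Polynomial.C (a j * a k) * Polynomial.X ^ 2 with hp
    have hpne : p ≠ 0 := by
      intro h
      have h2 : p.coeff 2 = a j * a k := by
        rw [hp]
        simp only [Polynomial.coeff_add, Polynomial.coeff_C_mul, Polynomial.coeff_C,
          Polynomial.coeff_X_pow, Polynomial.coeff_X, Polynomial.coeff_one]
        norm_num
      rw [h] at h2
      simp only [Polynomial.coeff_zero] at h2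
      exact mul_ne_zero (ha0 j) (ha0 k) h2.symm
    filter_upwards [ev_not_root p hpne] with ε hε heq
    apply hε
    have hev : p.eval ε = v ε j * v ε k - 1 := by
      rw [hp]
      simp only [hv]
      simp [Polynomial.eval_add, Polynomial.eval_mul, Polynomial.eval_pow]
      ring
    show p.IsRoot ε
    rw [Polynomial.IsRoot.def, hev, heq, sub_self]
  have hkey : ∀ᶠ ε in 𝓝[≠] (0 : ℂ), FuD d (v ε) = GuD d (v ε) := by
    filter_upwards [e1, e2, e3] with ε h1' h2' h3'
    exact schur_ioi d (v ε) (fun x y h => by_contra fun hne => h1' x y hne h) h2' h3'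
  -- limits
  have hvt : ∀ j, Tendsto (fun ε => v ε j) (𝓝[≠] (0 : ℂ)) (𝓝 (u j)) := by
    intro j
    have hc : Continuous fun ε : ℂ => u j + ε * a j := by continuity
    have h2 := hc.tendsto 0
    simp only [zero_mul, add_zero] at h2
    exact Filter.Tendsto.mono_left h2 nhdsWithin_le_nhds
  have hent : ∀ jj kk : Fin (2 * d), jj ≠ kk →
      Tendsto (fun ε => (v ε jj - v ε kk) / (1 - v ε jj * v ε kk)) (𝓝[≠] (0 : ℂ))
        (𝓝 ((u jj - u kk) / (1 - u jj * u kk))) := by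
    intro jj kk hne
    exact Tendsto.div ((hvt jj).sub (hvt kk))
      (tendsto_const_nhds.sub ((hvt jj).mul (hvt kk)))
      (sub_ne_zero.mpr (Ne.symm (hu jj kk hne)))
  have hFu : ∀ w : Fin (2 * d) → ℂ, FuD d w =
      ((2 : ℂ) ^ d * (Nat.factorial d : ℂ))⁻¹ *
        ∑ σ : Equiv.Perm (Fin (2 * d)),
          ((Equiv.Perm.sign σ : ℤ) : ℂ) *
            ∏ i : Fin d,
              ((w (σ ⟨2 * i.val, by have := i.isLt; omega⟩) -
                  w (σ ⟨2 * i.val + 1, by have := i.isLt; omega⟩)) /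
                (1 - w (σ ⟨2 * i.val, by have := i.isLt; omega⟩) *
                  w (σ ⟨2 * i.val + 1, by have := i.isLt; omega⟩))) :=
    fun w => rfl
  have t1 : Tendsto (fun ε => FuD d (v ε)) (𝓝[≠] (0 : ℂ)) (𝓝 (FuD d u)) := by
    simp only [hFu]
    apply Tendsto.const_mul
    apply tendsto_finset_sum
    intro σ _
    apply Tendsto.const_mul
    apply tendsto_finset_prod
    intro i _
    refine hent _ _ (σ.injective.ne ?_)
    intro h
    have := congrArg Fin.val h
    simp at this
  have t2 : Tendsto (fun ε => GuD d (v ε)) (𝓝[≠] (0 : ℂ)) (𝓝 (GuD d u)) := by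
    have hGu : ∀ w : Fin (2 * d) → ℂ, GuD d w =
        ∏ i : Fin (2 * d), ∏ j ∈ Finset.Ioi i, (w i - w j) / (1 - w i * w j) := fun w => rfl
    simp only [hGu]
    apply tendsto_finset_prod
    intro i _
    apply tendsto_finset_prod
    intro j hj
    exact hent i j (ne_of_lt (Finset.mem_Ioi.mp hj))
  exact tendsto_nhds_unique (Filter.Tendsto.congr' hkey t1) t2


end Perturb
end

section
/- Let $G(x_1,\dots,x_n) = \prod_{i<j} f(x_i x_j) \prod_{i=1}^n g(x_i)$. Then for $1 \le r \le n$ and pairwise distinct $x_1, \dots, x_n$ (with all denominators nonzero), $\frac{D^{r,q}_{n,X} G(X)}{G(X)} = q^{r(r-1)/2} \sum_{|A| = r} \prod_{i \in A, j \notin A} \frac{q x_i - x_j}{x_i - x_j} \cdot \frac{f(q x_i x_j)}{f(x_i x_j)} \prod_{i, j \in A} \frac{f(q^2 x_i x_j)}{f(x_i x_j)} \prod_{i \in A} \frac{g(q x_i)}{g(x_i)}$, where the second product over $i,j \in A$ is over pairs $i < j$, and the sum is over $r$-element subsets $A \subseteq \{1,\dots,n\}$. -/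
open scoped BigOperators

noncomputable section

/-- The `r`-th Macdonald difference operator (at `t = q`) acting on functions of
`n` complex variables. -/
def DopR (n r : ℕ) (q : ℂ) (F : (Fin n → ℂ) → ℂ) : (Fin n → ℂ) → ℂ :=
  fun x => q ^ (r * (r - 1) / 2) *
    ∑ I ∈ Finset.univ.powersetCard r,
      (∏ i ∈ I, ∏ j ∈ Finset.univ \ I, (q * x i - x j) / (x i - x j)) *
        F (fun j : Fin n => if j ∈ I then q * x j else x j)

/-- `G(x) = ∏_{i<j} f(x_i x_j) ∏_i g(x_i)`. -/
def Gfun (n : ℕ) (f g : ℂ → ℂ) : (Fin n → ℂ) → ℂ :=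
  fun y => (∏ p ∈ Finset.univ.filter (fun p : Fin n × Fin n => p.1 < p.2),
      f (y p.1 * y p.2)) * ∏ i : Fin n, g (y i)

open Finset

variable {n : ℕ} in
private lemma mixed_prod (I : Finset (Fin n)) (h : Fin n → Fin n → ℂ)
    (hsym : ∀ i j, h i j = h j i) :
    ∏ p ∈ (Finset.univ.filter (fun p : Fin n × Fin n => p.1 < p.2)).filter
        (fun p => ¬(p.1 ∈ I ∧ p.2 ∈ I) ∧ (p.1 ∈ I ∨ p.2 ∈ I)), h p.1 p.2
      = ∏ i ∈ I, ∏ j ∈ Finset.univ \ I, h i j := by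
  rw [← Finset.prod_product' I (Finset.univ \ I) (fun i j => h i j)]
  refine Finset.prod_nbij' (fun p => if p.1 ∈ I then p else p.swap)
      (fun p => if p.1 < p.2 then p else p.swap) ?_ ?_ ?_ ?_ ?_
  · intro p hp
    simp only [mem_filter, mem_univ, true_and] at hp
    obtain ⟨hlt, hnb, hor⟩ := hp
    by_cases h1 : p.1 ∈ I
    · have h2 : p.2 ∉ I := fun h2 => hnb ⟨h1, h2⟩
      simp [h1, h2]
    · have h2 : p.2 ∈ I := hor.resolve_left h1
      simp [h1, h2, Prod.swap]
  · intro p hp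
    simp only [mem_product, mem_sdiff, mem_univ, true_and] at hp
    obtain ⟨h1, h2⟩ := hp
    have hne : p.1 ≠ p.2 := fun h => h2 (h ▸ h1)
    by_cases hlt : p.1 < p.2
    · simp only [if_pos hlt, mem_filter, mem_univ, true_and]
      exact ⟨hlt, fun hb => h2 hb.2, Or.inl h1⟩
    · have hlt2 : p.2 < p.1 := lt_of_le_of_ne (not_lt.mp hlt) (Ne.symm hne)
      simp only [if_neg hlt, mem_filter, mem_univ, true_and, Prod.fst_swap, Prod.snd_swap]
      exact ⟨hlt2, fun hb => h2 hb.1, Or.inr h1⟩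
  · intro p hp
    simp only [mem_filter, mem_univ, true_and] at hp
    by_cases h1 : p.1 ∈ I
    · simp [h1, hp.1]
    · simp [h1, not_lt.mpr (le_of_lt hp.1), Prod.swap]
  · intro p hp
    simp only [mem_product, mem_sdiff, mem_univ, true_and] at hp
    obtain ⟨h1, h2⟩ := hp
    by_cases hlt : p.1 < p.2
    · simp [hlt, h1]
    · simp [hlt, h2, Prod.swap]
  · intro p hp
    by_cases h1 : p.1 ∈ I
    · simp [h1]
    · simp [h1, Prod.swap, hsym p.1 p.2]

variable {n : ℕ} in
private lemma gsplit (I : Finset (Fin n)) (gg : Fin n → ℂ) :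
    ∏ i : Fin n, gg i = (∏ i ∈ I, gg i) * ∏ i ∈ Finset.univ \ I, gg i := by
  rw [mul_comm, Finset.prod_sdiff (Finset.subset_univ I)]

variable {n : ℕ} in
private lemma fsplit (I : Finset (Fin n)) (F : Fin n × Fin n → ℂ) :
    ∏ p ∈ (Finset.univ.filter (fun p : Fin n × Fin n => p.1 < p.2)), F p
      = (∏ p ∈ (Finset.univ.filter (fun p : Fin n × Fin n => p.1 < p.2)).filter
            (fun p => p.1 ∈ I ∧ p.2 ∈ I), F p)
        * (∏ p ∈ (Finset.univ.filter (fun p : Fin n × Fin n => p.1 < p.2)).filter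
            (fun p => ¬(p.1 ∈ I ∧ p.2 ∈ I) ∧ (p.1 ∈ I ∨ p.2 ∈ I)), F p)
        * (∏ p ∈ (Finset.univ.filter (fun p : Fin n × Fin n => p.1 < p.2)).filter
            (fun p => ¬(p.1 ∈ I ∧ p.2 ∈ I) ∧ ¬(p.1 ∈ I ∨ p.2 ∈ I)), F p) := by
  have h1 := Finset.prod_filter_mul_prod_filter_not
    (Finset.univ.filter (fun p : Fin n × Fin n => p.1 < p.2))
    (fun p => p.1 ∈ I ∧ p.2 ∈ I) F
  have h2 := Finset.prod_filter_mul_prod_filter_not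
    ((Finset.univ.filter (fun p : Fin n × Fin n => p.1 < p.2)).filter
      (fun p => ¬(p.1 ∈ I ∧ p.2 ∈ I)))
    (fun p => p.1 ∈ I ∨ p.2 ∈ I) F
  have e1 : ((Finset.univ.filter (fun p : Fin n × Fin n => p.1 < p.2)).filter
        (fun p => ¬(p.1 ∈ I ∧ p.2 ∈ I))).filter (fun p => p.1 ∈ I ∨ p.2 ∈ I)
      = (Finset.univ.filter (fun p : Fin n × Fin n => p.1 < p.2)).filter
        (fun p => ¬(p.1 ∈ I ∧ p.2 ∈ I) ∧ (p.1 ∈ I ∨ p.2 ∈ I)) := by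
    ext p; simp only [Finset.mem_filter]; tauto
  have e2 : ((Finset.univ.filter (fun p : Fin n × Fin n => p.1 < p.2)).filter
        (fun p => ¬(p.1 ∈ I ∧ p.2 ∈ I))).filter (fun p => ¬(p.1 ∈ I ∨ p.2 ∈ I))
      = (Finset.univ.filter (fun p : Fin n × Fin n => p.1 < p.2)).filter
        (fun p => ¬(p.1 ∈ I ∧ p.2 ∈ I) ∧ ¬(p.1 ∈ I ∨ p.2 ∈ I)) := by
    ext p; simp only [Finset.mem_filter]; tauto
  rw [e1, e2] at h2
  rw [mul_assoc, h2, h1]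

variable {n : ℕ} in
private lemma P1eq (I : Finset (Fin n)) :
    (Finset.univ.filter (fun p : Fin n × Fin n => p.1 < p.2)).filter
      (fun p => p.1 ∈ I ∧ p.2 ∈ I)
    = (I ×ˢ I).filter (fun p : Fin n × Fin n => p.1 < p.2) := by
  ext p
  simp only [mem_filter, mem_univ, true_and, mem_product]
  tauto

variable {n : ℕ} in
private lemma key (q : ℂ) (f g : ℂ → ℂ) (x : Fin n → ℂ)
    (hf : ∀ i j, f (x i * x j) ≠ 0) (hg : ∀ i, g (x i) ≠ 0) (I : Finset (Fin n)) :
    Gfun n f g (fun j => if j ∈ I then q * x j else x j)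
      = ((∏ i ∈ I, ∏ j ∈ Finset.univ \ I, f (q * x i * x j) / f (x i * x j)) *
         (∏ p ∈ (I ×ˢ I).filter (fun p : Fin n × Fin n => p.1 < p.2),
            f (q ^ 2 * x p.1 * x p.2) / f (x p.1 * x p.2)) *
         (∏ i ∈ I, g (q * x i) / g (x i))) * Gfun n f g x := by
  classical
  simp only [Gfun]
  -- names for pieces
  set P := Finset.univ.filter (fun p : Fin n × Fin n => p.1 < p.2) with hP
  -- f part of shifted point
  have hf1 : ∏ p ∈ P.filter (fun p => p.1 ∈ I ∧ p.2 ∈ I),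
      f ((if p.1 ∈ I then q * x p.1 else x p.1) * (if p.2 ∈ I then q * x p.2 else x p.2))
      = ∏ p ∈ P.filter (fun p => p.1 ∈ I ∧ p.2 ∈ I), f (q ^ 2 * x p.1 * x p.2) := by
    refine Finset.prod_congr rfl fun p hp => ?_
    simp only [Finset.mem_filter] at hp
    rw [if_pos hp.2.1, if_pos hp.2.2]; congr 1; ring
  have hf2 : ∏ p ∈ P.filter (fun p => ¬(p.1 ∈ I ∧ p.2 ∈ I) ∧ (p.1 ∈ I ∨ p.2 ∈ I)),
      f ((if p.1 ∈ I then q * x p.1 else x p.1) * (if p.2 ∈ I then q * x p.2 else x p.2))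
      = ∏ p ∈ P.filter (fun p => ¬(p.1 ∈ I ∧ p.2 ∈ I) ∧ (p.1 ∈ I ∨ p.2 ∈ I)),
          f (q * x p.1 * x p.2) := by
    refine Finset.prod_congr rfl fun p hp => ?_
    simp only [Finset.mem_filter] at hp
    obtain ⟨-, hnb, hor⟩ := hp
    by_cases h1 : p.1 ∈ I
    · have h2 : p.2 ∉ I := fun h2 => hnb ⟨h1, h2⟩
      rw [if_pos h1, if_neg h2]
    · have h2 : p.2 ∈ I := hor.resolve_left h1
      rw [if_neg h1, if_pos h2]; congr 1; ring
  have hf3 : ∏ p ∈ P.filter (fun p => ¬(p.1 ∈ I ∧ p.2 ∈ I) ∧ ¬(p.1 ∈ I ∨ p.2 ∈ I)),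
      f ((if p.1 ∈ I then q * x p.1 else x p.1) * (if p.2 ∈ I then q * x p.2 else x p.2))
      = ∏ p ∈ P.filter (fun p => ¬(p.1 ∈ I ∧ p.2 ∈ I) ∧ ¬(p.1 ∈ I ∨ p.2 ∈ I)),
          f (x p.1 * x p.2) := by
    refine Finset.prod_congr rfl fun p hp => ?_
    simp only [Finset.mem_filter] at hp
    obtain ⟨-, -, hn⟩ := hp
    rw [if_neg (fun h => hn (Or.inl h)), if_neg (fun h => hn (Or.inr h))]
  -- g part of shifted point
  have hg1 : ∏ i : Fin n, g (if i ∈ I then q * x i else x i)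
      = (∏ i ∈ I, g (q * x i)) * ∏ i ∈ Finset.univ \ I, g (x i) := by
    rw [gsplit I]
    congr 1
    · exact Finset.prod_congr rfl fun i hi => by rw [if_pos hi]
    · exact Finset.prod_congr rfl fun i hi => by
        rw [if_neg (Finset.mem_sdiff.mp hi).2]
  -- rewrite both sides
  rw [fsplit I (fun p => f ((if p.1 ∈ I then q * x p.1 else x p.1) *
        (if p.2 ∈ I then q * x p.2 else x p.2))),
      fsplit I (fun p => f (x p.1 * x p.2)), hf1, hf2, hf3, hg1,
      gsplit I (fun i => g (x i))]
  -- rewrite ratio products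
  have hr1 : ∏ i ∈ I, ∏ j ∈ Finset.univ \ I, f (q * x i * x j) / f (x i * x j)
      = (∏ p ∈ P.filter (fun p => ¬(p.1 ∈ I ∧ p.2 ∈ I) ∧ (p.1 ∈ I ∨ p.2 ∈ I)),
          f (q * x p.1 * x p.2))
        / ∏ p ∈ P.filter (fun p => ¬(p.1 ∈ I ∧ p.2 ∈ I) ∧ (p.1 ∈ I ∨ p.2 ∈ I)),
            f (x p.1 * x p.2) := by
    simp only [Finset.prod_div_distrib]
    rw [mixed_prod I (fun i j => f (q * x i * x j))
          (fun i j => show f (q * x i * x j) = f (q * x j * x i) by rw [mul_right_comm]),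
        mixed_prod I (fun i j => f (x i * x j))
          (fun i j => show f (x i * x j) = f (x j * x i) by rw [mul_comm (x i) (x j)])]
  have hr2 : ∏ p ∈ (I ×ˢ I).filter (fun p : Fin n × Fin n => p.1 < p.2),
        f (q ^ 2 * x p.1 * x p.2) / f (x p.1 * x p.2)
      = (∏ p ∈ P.filter (fun p => p.1 ∈ I ∧ p.2 ∈ I), f (q ^ 2 * x p.1 * x p.2))
        / ∏ p ∈ P.filter (fun p => p.1 ∈ I ∧ p.2 ∈ I), f (x p.1 * x p.2) := by
    rw [← P1eq, Finset.prod_div_distrib]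
  have hr3 : ∏ i ∈ I, g (q * x i) / g (x i)
      = (∏ i ∈ I, g (q * x i)) / ∏ i ∈ I, g (x i) := Finset.prod_div_distrib _ _
  rw [hr1, hr2, hr3]
  clear hr1 hr2 hr3 hf1 hf2 hf3 hg1
  have d1 : (∏ p ∈ P.filter (fun p => ¬(p.1 ∈ I ∧ p.2 ∈ I) ∧ (p.1 ∈ I ∨ p.2 ∈ I)),
      f (x p.1 * x p.2)) ≠ 0 := Finset.prod_ne_zero_iff.mpr fun p _ => hf p.1 p.2
  have d2 : (∏ p ∈ P.filter (fun p => p.1 ∈ I ∧ p.2 ∈ I), f (x p.1 * x p.2)) ≠ 0 :=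
    Finset.prod_ne_zero_iff.mpr fun p _ => hf p.1 p.2
  have d3 : (∏ i ∈ I, g (x i)) ≠ 0 := Finset.prod_ne_zero_iff.mpr fun i _ => hg i
  rw [div_mul_div_comm, div_mul_div_comm, div_mul_eq_mul_div,
    eq_div_iff (mul_ne_zero (mul_ne_zero d1 d2) d3)]
  ring

/-- Action of the `r`-th Macdonald difference operator on a Pfaffian-decomposable
function (residue-sum form). -/
theorem statement11 (n r : ℕ) (hr1 : 1 ≤ r) (hrn : r ≤ n) (q : ℂ) (f g : ℂ → ℂ)
    (x : Fin n → ℂ)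
    (hx : ∀ i j : Fin n, i ≠ j → x i ≠ x j)
    (hf : ∀ i j : Fin n, f (x i * x j) ≠ 0)
    (hg : ∀ i : Fin n, g (x i) ≠ 0) :
    DopR n r q (Gfun n f g) x / Gfun n f g x
      = q ^ (r * (r - 1) / 2) *
        ∑ A ∈ (Finset.univ.powersetCard r : Finset (Finset (Fin n))),
          (∏ i ∈ A, ∏ j ∈ Finset.univ \ A,
              ((q * x i - x j) / (x i - x j)) * (f (q * x i * x j) / f (x i * x j))) *
            (∏ p ∈ (A ×ˢ A).filter (fun p : Fin n × Fin n => p.1 < p.2),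
              f (q ^ 2 * x p.1 * x p.2) / f (x p.1 * x p.2)) *
            ∏ i ∈ A, g (q * x i) / g (x i) := by
  have hG : Gfun n f g x ≠ 0 := by
    simp only [Gfun]
    exact mul_ne_zero (Finset.prod_ne_zero_iff.mpr fun p _ => hf p.1 p.2)
      (Finset.prod_ne_zero_iff.mpr fun i _ => hg i)
  have hsum : ∀ I ∈ Finset.univ.powersetCard r,
      (∏ i ∈ I, ∏ j ∈ Finset.univ \ I, (q * x i - x j) / (x i - x j)) *
        Gfun n f g (fun j : Fin n => if j ∈ I then q * x j else x j)
      = ((∏ i ∈ I, ∏ j ∈ Finset.univ \ I,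
            ((q * x i - x j) / (x i - x j)) * (f (q * x i * x j) / f (x i * x j))) *
          (∏ p ∈ (I ×ˢ I).filter (fun p : Fin n × Fin n => p.1 < p.2),
            f (q ^ 2 * x p.1 * x p.2) / f (x p.1 * x p.2)) *
          ∏ i ∈ I, g (q * x i) / g (x i)) * Gfun n f g x := by
    intro I _
    rw [key q f g x hf hg I]
    simp only [Finset.prod_mul_distrib]
    ring
  simp only [DopR]
  beta_reduce
  rw [Finset.sum_congr rfl hsum, ← Finset.sum_mul, ← mul_assoc,
    mul_div_assoc, div_self hG, mul_one]
end
end
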